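/- arXiv:2505.08963 — 3 statements merged into one kernel-verified Lean document; each statement's English description precedes it below -/
import Mathlib

section
/- Let R be a linear subspace of a Hilbert space V and w ∈ V. Then the function v ↦ ‖w − v‖ attains its infimum over R if and only if w ∈ R + R^⊥ (where R^⊥ is the orthogonal complement of R). -/
/-!
A point `v ∈ R` is a nearest point to `w` exactly when `w - v ⊥ R`: Pythagoras gives
`‖w - r‖² = ‖w - v‖² + ‖v - r‖²` in one direction, and minimality along each line `v + t r`
forces `⟪w - v, r⟫ = 0` in the other. So a minimizer `v` yields `w = v + (w - v) ∈ R + Rᗮ`,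
and conversely the `R`-component of such a splitting is a minimizer.
-/

open scoped RealInnerProductSpace

namespace Submodule

variable {F : Type*} [NormedAddCommGroup F] [InnerProductSpace ℝ F] (K : Submodule ℝ F) {u v : F}

theorem sub_mem_orthogonal_of_forall_norm_sub_le (hv : v ∈ K)
    (hmin : ∀ w ∈ K, ‖u - v‖ ≤ ‖u - w‖) : u - v ∈ Kᗮ := by
  have hinf : ‖u - v‖ = ⨅ w : (K : Set F), ‖u - w‖ :=
    le_antisymm (le_ciInf fun w => hmin w w.2)
      (ciInf_le ⟨0, Set.forall_mem_range.2 fun _ => norm_nonneg _⟩ (⟨v, hv⟩ : (K : Set F)))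
  intro w hw
  rw [real_inner_comm]
  exact (K.norm_eq_iInf_iff_real_inner_eq_zero hv).mp hinf w hw

theorem norm_sub_le_of_sub_mem_orthogonal (hv : v ∈ K) (horth : u - v ∈ Kᗮ) {w : F}
    (hw : w ∈ K) : ‖u - v‖ ≤ ‖u - w‖ := by
  have hpyth : ‖u - w‖ * ‖u - w‖ = ‖u - v‖ * ‖u - v‖ + ‖v - w‖ * ‖v - w‖ := by
    rw [← sub_add_sub_cancel u v w]
    exact norm_add_sq_eq_norm_sq_add_norm_sq_real (inner_eq_zero_symm.1 (horth _ (K.sub_mem hv hw)))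
  rw [mul_self_le_mul_self_iff (norm_nonneg _) (norm_nonneg _), hpyth]
  exact le_add_of_nonneg_right (mul_self_nonneg _)

end Submodule

theorem stmt_3_general {V : Type*} [NormedAddCommGroup V] [InnerProductSpace ℝ V]
    (R : Submodule ℝ V) (w : V) :
    (∃ v ∈ R, ∀ r ∈ R, ‖w - v‖ ≤ ‖w - r‖) ↔
      (∃ r ∈ R, ∃ p ∈ Rᗮ, w = r + p) := by
  constructor
  · rintro ⟨v, hv, hmin⟩
    exact ⟨v, hv, w - v, R.sub_mem_orthogonal_of_forall_norm_sub_le hv hmin,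
      (add_sub_cancel v w).symm⟩
  · rintro ⟨r, hr, p, hp, rfl⟩
    refine ⟨r, hr, fun r' hr' => R.norm_sub_le_of_sub_mem_orthogonal hr ?_ hr'⟩
    rwa [add_sub_cancel_left]

/-- `v ↦ ‖w − v‖` attains its infimum over a (not necessarily closed)
subspace `R` iff `w ∈ R + R^⊥`. -/
theorem stmt_3 {V : Type*} [NormedAddCommGroup V] [InnerProductSpace ℝ V] [CompleteSpace V]
    (R : Submodule ℝ V) (w : V) :
    (∃ v ∈ R, ∀ r ∈ R, ‖w - v‖ ≤ ‖w - r‖) ↔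
      (∃ r ∈ R, ∃ p ∈ Rᗮ, w = r + p) :=
  stmt_3_general R w
end

section
/- Let Q : U → V be a bounded linear operator between Hilbert spaces. Then the set of least-squares solutions U_{Q,w} := {u* ∈ U : ‖w − Qu*‖ = inf_{u∈U} ‖w − Qu‖} is nonempty for every w ∈ V if and only if the range of Q is closed in V. -/
/-!
If the range of `Q` is closed, it is a closed convex subset of the Hilbert space `V`, so every
`w` has a nearest point `Q u*` in it. Conversely, a point of the closure of the range is at
distance `0` from its nearest point in the range, hence belongs to the range.
-/

open Set

theorem Metric.isClosed_of_forall_exists_nearest {X : Type*} [MetricSpace X] {S : Set X}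
    (h : ∀ x, ∃ y ∈ S, ∀ z ∈ S, dist x y ≤ dist x z) : IsClosed S := by
  refine isClosed_of_closure_subset fun x hx => ?_
  obtain ⟨y, hyS, hy⟩ := h x
  suffices dist x y = 0 from dist_eq_zero.1 this ▸ hyS
  by_contra hne
  obtain ⟨z, hzS, hz⟩ := Metric.mem_closure_iff.1 hx _ (dist_nonneg.lt_of_ne' hne)
  exact (hy z hzS).not_gt hz

theorem exists_forall_norm_sub_le_of_isComplete_of_convex {F : Type*} [NormedAddCommGroup F]
    [InnerProductSpace ℝ F] {K : Set F} (hne : K.Nonempty) (hK : IsComplete K)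
    (hconv : Convex ℝ K) (u : F) : ∃ v ∈ K, ∀ w ∈ K, ‖u - v‖ ≤ ‖u - w‖ := by
  obtain ⟨v, hvK, hv⟩ := exists_norm_eq_iInf_of_complete_convex hne hK hconv u
  refine ⟨v, hvK, fun w hw => hv ▸ ?_⟩
  exact ciInf_le ⟨0, forall_mem_range.2 fun _ => norm_nonneg _⟩ (⟨w, hw⟩ : K)

theorem stmt_4_general {U V : Type*} [NormedAddCommGroup U] [InnerProductSpace ℝ U]
    [NormedAddCommGroup V] [InnerProductSpace ℝ V] [CompleteSpace V]
    (Q : U →L[ℝ] V) :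
    (∀ w : V, ∃ ustar : U, ∀ u : U, ‖w - Q ustar‖ ≤ ‖w - Q u‖) ↔
      IsClosed (Set.range Q) := by
  constructor
  · intro h
    refine Metric.isClosed_of_forall_exists_nearest fun w => ?_
    obtain ⟨ustar, hmin⟩ := h w
    exact ⟨Q ustar, mem_range_self ustar,
      forall_mem_range.2 fun u => by simpa only [dist_eq_norm] using hmin u⟩
  · intro hcl w
    have hconv : Convex ℝ (range Q) := by
      simpa only [LinearMap.coe_range, ContinuousLinearMap.coe_coe]
        using (LinearMap.range (Q : U →ₗ[ℝ] V)).convex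
    obtain ⟨_, ⟨ustar, rfl⟩, hmin⟩ :=
      exists_forall_norm_sub_le_of_isComplete_of_convex (range_nonempty Q) hcl.isComplete hconv w
    exact ⟨ustar, fun u => hmin _ (mem_range_self u)⟩

/-- least-squares solutions of `Qu = w` exist for every `w` iff
the range of `Q` is closed. -/
theorem stmt_4 {U V : Type*} [NormedAddCommGroup U] [InnerProductSpace ℝ U] [CompleteSpace U]
    [NormedAddCommGroup V] [InnerProductSpace ℝ V] [CompleteSpace V]
    (Q : U →L[ℝ] V) :
    (∀ w : V, ∃ ustar : U, ∀ u : U, ‖w - Q ustar‖ ≤ ‖w - Q u‖) ↔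
      IsClosed (Set.range Q) :=
  stmt_4_general Q
end

section
/- Let P_B denote convolution with sinc (the orthogonal projection from L²(ℝ) onto the space B of functions bandlimited to [−1/2, 1/2]), and let φ(t) := ∫₀ᵗ (t−τ) sinc(τ) dτ. Then for all real a ≤ b and c ≤ d, ⟨P_B 1_{[a,b]}, 1_{[c,d]}⟩_{L²} = φ(d−a) − φ(d−b) − φ(c−a) + φ(c−b). -/
open intervalIntegral MeasureTheory

/-- normalized sinc: `sinc τ = sin(πτ)/(πτ)`, `sinc 0 = 1`. -/
noncomputable def sinc (τ : ℝ) : ℝ :=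
  if τ = 0 then 1 else Real.sin (Real.pi * τ) / (Real.pi * τ)

/-- `φ(t) := ∫₀ᵗ (t−τ) sinc τ dτ`. -/
noncomputable def phi (t : ℝ) : ℝ := ∫ τ in (0:ℝ)..t, (t - τ) * sinc τ

/-!
Convolving `sinc` with `1_{[a,b]}` integrates `sinc` over `[s - b, s - a]`, i.e. gives a
difference `S (s - a) - S (s - b)` of values of the primitive `S t = ∫₀ᵗ sinc`. Integrating this
over `[c, d]` produces second differences of a primitive of `S`, and by Cauchy's formula for
repeated integration that primitive is `φ`.
-/

lemma sinc_eq_real_sinc (τ : ℝ) : sinc τ = Real.sinc (Real.pi * τ) := by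
  simp [sinc, Real.sinc, Real.pi_ne_zero]

lemma continuous_sinc : Continuous sinc := by
  rw [funext sinc_eq_real_sinc]
  exact Real.continuous_sinc.comp (continuous_const_mul _)

lemma integral_mul_indicator_Icc_sub (f : ℝ → ℝ) {a b : ℝ} (hab : a ≤ b) (s : ℝ) :
    ∫ τ, f τ * Set.indicator (Set.Icc a b) (fun _ => (1:ℝ)) (s - τ) = ∫ τ in s - b..s - a, f τ := by
  have hindicator : (fun τ => f τ * Set.indicator (Set.Icc a b) (fun _ => (1:ℝ)) (s - τ)) =
      Set.indicator (Set.Icc (s - b) (s - a)) f := by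
    ext τ
    by_cases hτ : τ ∈ Set.Icc (s - b) (s - a)
    · have : s - τ ∈ Set.Icc a b := ⟨by linarith [hτ.2], by linarith [hτ.1]⟩
      simp [Set.indicator_of_mem this, Set.indicator_of_mem hτ]
    · have : s - τ ∉ Set.Icc a b := fun h => hτ ⟨by linarith [h.2], by linarith [h.1]⟩
      simp [Set.indicator_of_notMem this, Set.indicator_of_notMem hτ]
  rw [hindicator, MeasureTheory.integral_indicator measurableSet_Icc, integral_Icc_eq_integral_Ioc,
    integral_of_le (by linarith)]

lemma integral_sub_mul_eq_integral_integral {f : ℝ → ℝ} (hf : Continuous f) (t : ℝ) :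
    ∫ τ in (0:ℝ)..t, (t - τ) * f τ = ∫ u in (0:ℝ)..t, ∫ τ in (0:ℝ)..u, f τ := by
  have hprimitive (x : ℝ) : HasDerivAt (fun u => ∫ τ in (0:ℝ)..u, f τ) (f x) x :=
    integral_hasDerivAt_right (hf.intervalIntegrable _ _) (hf.stronglyMeasurableAtFilter _ _)
      hf.continuousAt
  rw [integral_mul_deriv_eq_deriv_mul (u := fun τ => t - τ) (u' := fun _ => -1)
    (fun x _ => (hasDerivAt_id' x).const_sub t) (fun x _ => hprimitive x)
    intervalIntegrable_const (hf.intervalIntegrable _ _)]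
  simp [intervalIntegral.integral_neg]

theorem stmt_17_general (a b c d : ℝ) (hab : a ≤ b) :
    ∫ s in c..d, (∫ τ : ℝ, sinc τ * Set.indicator (Set.Icc a b) (fun _ => (1:ℝ)) (s - τ)) =
      phi (d - a) - phi (d - b) - phi (c - a) + phi (c - b) := by
  set S : ℝ → ℝ := fun t => ∫ τ in (0:ℝ)..t, sinc τ
  have hS : Continuous S := continuous_primitive (fun _ _ => continuous_sinc.intervalIntegrable _ _) 0
  have hphi (t : ℝ) : phi t = ∫ u in (0:ℝ)..t, S u :=
    integral_sub_mul_eq_integral_integral continuous_sinc t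
  have hshift (x : ℝ) : ∫ s in c..d, S (s - x) = phi (d - x) - phi (c - x) := by
    rw [integral_comp_sub_right S x, hphi, hphi,
      integral_interval_sub_left (hS.intervalIntegrable _ _) (hS.intervalIntegrable _ _)]
  have hintegrable (x : ℝ) : IntervalIntegrable (fun s => S (s - x)) volume c d :=
    (hS.comp (continuous_sub_right x)).intervalIntegrable _ _
  calc ∫ s in c..d, (∫ τ : ℝ, sinc τ * Set.indicator (Set.Icc a b) (fun _ => (1:ℝ)) (s - τ))
      = ∫ s in c..d, (S (s - a) - S (s - b)) := by
        refine integral_congr fun s _ => ?_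
        rw [integral_mul_indicator_Icc_sub sinc hab, ← integral_interval_sub_left
          (continuous_sinc.intervalIntegrable _ _) (continuous_sinc.intervalIntegrable _ _)]
    _ = phi (d - a) - phi (d - b) - phi (c - a) + phi (c - b) := by
        rw [integral_sub (hintegrable a) (hintegrable b), hshift, hshift]
        ring

/-- with `P_B f = sinc * f` (bandlimiting projection) and
`1_{[a,b]}` indicator functions,
`⟨P_B 1_{[a,b]}, 1_{[c,d]}⟩ = φ(d−a) − φ(d−b) − φ(c−a) + φ(c−b)`. -/
theorem stmt_17 (a b c d : ℝ) (hab : a ≤ b) (hcd : c ≤ d) :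
    ∫ s in c..d, (∫ τ : ℝ, sinc τ * Set.indicator (Set.Icc a b) (fun _ => (1:ℝ)) (s - τ)) =
      phi (d - a) - phi (d - b) - phi (c - a) + phi (c - b) :=
  stmt_17_general a b c d hab
end
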